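/- arXiv:2409.07201 — 3 statements merged into one kernel-verified Lean document; each statement's English description precedes it below -/
import Mathlib

section
/- Let G = (V, E) be a finite simple graph with m ≥ 1 edges, let w_2 > 2, and let α be an integer with α ≥ m·w_2 + 1. Construct the hypergraph H whose vertex set is V together with new vertices s_1, …, s_α and t_1, …, t_α, and whose hyperedges are: all 2-element subsets of {s_1, …, s_α}, all 2-element subsets of {t_1, …, t_α}, and for each edge {x, y} ∈ E the two hyperedges {s_1, s_2, x, y} and {t_1, t_2, x, y}. Then the minimum, over all cuts S* with s_1 ∈ S* and t_1 ∉ S*, of the cardinality-based cost of S* (weights w_0 = 0, w_1 = 1, w_2) equals m·w_2 + (2 − w_2)·mc(G), where mc(G) is the maximum, over all subsets U ⊆ V, of the number of edges of G with exactly one endpoint in U. -/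
/-!
If `S` puts every `s_i` on one side and every `t_i` on the other, the two cliques cost nothing,
and an edge `{x, y}` of `G` with `k` endpoints in `S` contributes `w (2 - k) + w k` through
`{s₁, s₂, x, y}` and `{t₁, t₂, x, y}`: this is `2` if the edge is cut and `w₂` otherwise. Such a cut
thus costs `m w₂ + (2 - w₂) c`, with `c` the size of the induced cut of `G`, and since `w₂ > 2` the
best choice is a maximum cut. Any other cut with `s₁ ∈ S`, `t₁ ∉ S` splits one of the two cliques
on `α` vertices, which already costs at least `α - 1 ≥ m w₂`.
-/

/-- The split value of a hyperedge `e` with respect to a cut `S`: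
`min (|e ∩ S|, |e \ S|)`. -/
def splitVal {W : Type*} [DecidableEq W] (S e : Finset W) : ℕ :=
  min (e ∩ S).card (e \ S).card

/-- The vertex set of the constructed hypergraph: the original vertices `V`
together with `s`-vertices and `t`-vertices (indexed by naturals). -/
abbrev Vtx (V : Type*) := V ⊕ ℕ ⊕ ℕ

/-- The vertex `s_i`. -/
def sV {V : Type*} (i : ℕ) : Vtx V := Sum.inr (Sum.inl i)

/-- The vertex `t_i`. -/
def tV {V : Type*} (i : ℕ) : Vtx V := Sum.inr (Sum.inr i)

/-- The set `{s_1, …, s_j}`. -/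
def sSet (V : Type*) [DecidableEq V] (j : ℕ) : Finset (Vtx V) := (Finset.Icc 1 j).image sV

/-- The set `{t_1, …, t_j}`. -/
def tSet (V : Type*) [DecidableEq V] (j : ℕ) : Finset (Vtx V) := (Finset.Icc 1 j).image tV

/-- The two endpoints of a graph edge, as a `Finset`. -/
def pairFinset {V : Type*} [DecidableEq V] (e : Sym2 V) : Finset V :=
  Sym2.lift ⟨fun x y => ({x, y} : Finset V), fun _ _ => Finset.pair_comm _ _⟩ e

/-- The image `{x, y}` (inside `Vtx V`) of a graph edge `{x, y}`. -/
def edgeImg {V : Type*} [DecidableEq V] (e : Sym2 V) : Finset (Vtx V) :=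
  (pairFinset e).image Sum.inl

/-- The hyperedge family of the hypergraph `H` built from the graph `G`:
all 2-element subsets of `{s_1,…,s_α}`, all 2-element subsets of `{t_1,…,t_α}`,
and for each edge `{x,y}` of `G` the hyperedges `{s_1,s_2,x,y}` and `{t_1,t_2,x,y}`. -/
def H0 {V : Type*} [Fintype V] [DecidableEq V] (G : SimpleGraph V) [DecidableRel G.Adj]
    (α : ℕ) : Finset (Finset (Vtx V)) :=
  (sSet V α).powersetCard 2 ∪ (tSet V α).powersetCard 2 ∪
    G.edgeFinset.image (fun e => sSet V 2 ∪ edgeImg e) ∪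
    G.edgeFinset.image (fun e => tSet V 2 ∪ edgeImg e)

/-- The maximum cut value of `G`: the maximum over subsets `U` of the vertex set
of the number of edges with exactly one endpoint in `U`. -/
def maxCut {V : Type*} [Fintype V] [DecidableEq V] (G : SimpleGraph V)
    [DecidableRel G.Adj] : ℕ :=
  Finset.univ.sup fun U : Finset V =>
    (G.edgeFinset.filter (fun e => (pairFinset e ∩ U).card = 1)).card

open Finset

def cutCost {W : Type*} [DecidableEq W] (w : ℕ → ℝ) (H : Finset (Finset W)) (S : Finset W) :
    ℝ :=
  ∑ e ∈ H, w (splitVal S e)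

def cutSize {V : Type*} [Fintype V] [DecidableEq V] (G : SimpleGraph V) [DecidableRel G.Adj]
    (U : Finset V) : ℕ :=
  #(G.edgeFinset.filter fun e => #(pairFinset e ∩ U) = 1)

section splitVal

variable {W : Type*} [DecidableEq W] {S e K X : Finset W}

lemma two_mul_splitVal_le_card (S e : Finset W) : 2 * splitVal S e ≤ #e := by
  have := card_inter_add_card_sdiff e S
  unfold splitVal
  omega

lemma splitVal_eq_zero_of_subset (h : e ⊆ S) : splitVal S e = 0 := by
  simp [splitVal, sdiff_eq_empty_iff_subset.2 h]

lemma splitVal_eq_zero_of_disjoint (h : Disjoint e S) : splitVal S e = 0 := by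
  simp [splitVal, disjoint_iff_inter_eq_empty.1 h]

lemma splitVal_pair {u v : W} (hu : u ∈ S) (hv : v ∉ S) : splitVal S {u, v} = 1 := by
  rw [splitVal, insert_inter_of_mem hu, singleton_inter_of_notMem hv, insert_sdiff_of_mem _ hu,
    sdiff_eq_self_of_disjoint (disjoint_singleton_left.2 hv)]
  simp

lemma splitVal_union_of_subset (hK : K ⊆ S) (h : Disjoint K X) :
    splitVal S (K ∪ X) = min (#K + #(X ∩ S)) #(X \ S) := by
  rw [splitVal, union_inter_distrib_right, inter_eq_left.2 hK,
    card_union_of_disjoint (h.mono_right inter_subset_left), union_sdiff_distrib,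
    sdiff_eq_empty_iff_subset.2 hK, empty_union]

lemma splitVal_union_of_disjoint (hK : Disjoint K S) (h : Disjoint K X) :
    splitVal S (K ∪ X) = min #(X ∩ S) (#K + #(X \ S)) := by
  rw [splitVal, union_inter_distrib_right, disjoint_iff_inter_eq_empty.1 hK, empty_union,
    union_sdiff_distrib, sdiff_eq_self_of_disjoint hK,
    card_union_of_disjoint (h.mono_right sdiff_subset)]

lemma card_sub_one_le_sum_splitVal_pairs {w : ℕ → ℝ} (hw0 : w 0 = 0) (hw1 : w 1 = 1)
    {A : Finset W} (hin : (A ∩ S).Nonempty) (hout : (A \ S).Nonempty) :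
    (#A : ℝ) - 1 ≤ ∑ p ∈ A.powersetCard 2, w (splitVal S p) := by
  -- The `a * b` pairs `{x, y}` with `x ∈ A ∩ S`, `y ∈ A \ S` are split, and `a * b ≥ a + b - 1`.
  set P := ((A ∩ S) ×ˢ (A \ S)).image fun q : W × W => ({q.1, q.2} : Finset W)
  have hinj : Set.InjOn (fun q : W × W => ({q.1, q.2} : Finset W)) ↑((A ∩ S) ×ˢ (A \ S)) := by
    simp only [Set.InjOn, coe_product, Set.mem_prod, mem_coe, mem_inter, mem_sdiff]
    rintro ⟨x, y⟩ ⟨⟨-, hx⟩, -, hy⟩ ⟨x', y'⟩ ⟨⟨-, hx'⟩, -, hy'⟩ h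
    have hxx : x ∈ ({x', y'} : Finset W) := h ▸ by simp
    have hyy : y ∈ ({x', y'} : Finset W) := h ▸ by simp
    simp only [mem_insert, mem_singleton] at hxx hyy
    grind
  have hP : P ⊆ A.powersetCard 2 := by
    simp only [P, subset_iff, mem_image, mem_product, mem_inter, mem_sdiff, mem_powersetCard]
    rintro p ⟨⟨x, y⟩, ⟨⟨hxA, hx⟩, hyA, hy⟩, rfl⟩
    have hxy : x ≠ y := by rintro rfl; exact hy hx
    exact ⟨insert_subset hxA (singleton_subset_iff.2 hyA), card_pair hxy⟩
  have hPw : ∀ p ∈ P, w (splitVal S p) = 1 := by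
    simp only [P, mem_image, mem_product, mem_inter, mem_sdiff]
    rintro p ⟨⟨x, y⟩, ⟨⟨-, hx⟩, -, hy⟩, rfl⟩
    rw [splitVal_pair hx hy, hw1]
  have hnn : ∀ p ∈ A.powersetCard 2, 0 ≤ w (splitVal S p) := by
    intro p hp
    have := two_mul_splitVal_le_card S p
    rw [(mem_powersetCard.1 hp).2] at this
    obtain h | h : splitVal S p = 0 ∨ splitVal S p = 1 := by omega
    all_goals simp [h, hw0, hw1]
  have hPcard : (#A : ℝ) - 1 ≤ #P := by
    have hA := card_inter_add_card_sdiff A S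
    have ha : (1 : ℝ) ≤ #(A ∩ S) := by exact_mod_cast hin.card_pos
    have hb : (1 : ℝ) ≤ #(A \ S) := by exact_mod_cast hout.card_pos
    rw [card_image_of_injOn hinj, card_product, ← hA]
    push_cast
    nlinarith [mul_nonneg (sub_nonneg.2 ha) (sub_nonneg.2 hb)]
  calc (#A : ℝ) - 1 ≤ #P := hPcard
    _ = ∑ p ∈ P, w (splitVal S p) := by simp [sum_congr rfl hPw]
    _ ≤ ∑ p ∈ A.powersetCard 2, w (splitVal S p) :=
      sum_le_sum_of_subset_of_nonneg hP fun p hp _ => hnn p hp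

end splitVal

section construction

lemma sV_injective {V : Type*} : Function.Injective (sV : ℕ → Vtx V) := fun _ _ h => by
  simpa [sV] using h

lemma tV_injective {V : Type*} : Function.Injective (tV : ℕ → Vtx V) := fun _ _ h => by
  simpa [tV] using h

variable {V : Type*} [DecidableEq V]

lemma card_sSet (j : ℕ) : #(sSet V j) = j := by
  simp [sSet, card_image_of_injective _ sV_injective]

lemma card_tSet (j : ℕ) : #(tSet V j) = j := by
  simp [tSet, card_image_of_injective _ tV_injective]

lemma sV_mem_sSet {i j : ℕ} (h1 : 1 ≤ i) (hj : i ≤ j) : sV i ∈ sSet V j :=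
  mem_image_of_mem _ (mem_Icc.2 ⟨h1, hj⟩)

lemma tV_mem_tSet {i j : ℕ} (h1 : 1 ≤ i) (hj : i ≤ j) : tV i ∈ tSet V j :=
  mem_image_of_mem _ (mem_Icc.2 ⟨h1, hj⟩)

lemma sSet_mono {j k : ℕ} (h : j ≤ k) : sSet V j ⊆ sSet V k :=
  image_subset_image (Icc_subset_Icc_right h)

lemma tSet_mono {j k : ℕ} (h : j ≤ k) : tSet V j ⊆ tSet V k :=
  image_subset_image (Icc_subset_Icc_right h)

lemma disjoint_sSet_edgeImg (j : ℕ) (e : Sym2 V) : Disjoint (sSet V j) (edgeImg e) := by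
  simp [disjoint_left, sSet, edgeImg, sV]

lemma disjoint_tSet_edgeImg (j : ℕ) (e : Sym2 V) : Disjoint (tSet V j) (edgeImg e) := by
  simp [disjoint_left, tSet, edgeImg, tV]

lemma mem_pairFinset {v : V} {e : Sym2 V} : v ∈ pairFinset e ↔ v ∈ e := by
  induction e using Sym2.ind
  simp [pairFinset]

lemma pairFinset_injective : Function.Injective (pairFinset (V := V)) := fun _ _ h =>
  Sym2.ext fun v => by rw [← mem_pairFinset, h, mem_pairFinset]

lemma card_edgeImg {e : Sym2 V} (he : ¬e.IsDiag) : #(edgeImg e) = 2 := by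
  induction e using Sym2.ind
  simp_all [edgeImg, pairFinset]

lemma union_edgeImg_injective {K : Finset (Vtx V)} (hK : ∀ e, Disjoint K (edgeImg e)) :
    Function.Injective fun e => K ∪ edgeImg e := by
  intro e e' (h : K ∪ edgeImg e = K ∪ edgeImg e')
  refine pairFinset_injective <| image_injective Sum.inl_injective (?_ : edgeImg e = edgeImg e')
  rw [← union_sdiff_cancel_left (hK e), h, union_sdiff_cancel_left (hK e')]

lemma card_edgeImg_inter {S : Finset (Vtx V)} {U : Finset V}
    (hU : ∀ v, Sum.inl v ∈ S ↔ v ∈ U) (e : Sym2 V) :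
    #(edgeImg e ∩ S) = #(pairFinset e ∩ U) := by
  have : edgeImg e ∩ S = (pairFinset e ∩ U).image Sum.inl := by
    ext x
    simp only [edgeImg, mem_inter, mem_image]
    grind
  rw [this, card_image_of_injective _ Sum.inl_injective]

end construction

section hypergraph

variable {V : Type*} [DecidableEq V] {w : ℕ → ℝ} {S : Finset (Vtx V)} {U : Finset V}

lemma edge_cost_of_separates (hw0 : w 0 = 0) (hw1 : w 1 = 1) (hs : sSet V 2 ⊆ S)
    (ht : Disjoint (tSet V 2) S) (hU : ∀ v, Sum.inl v ∈ S ↔ v ∈ U) {e : Sym2 V}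
    (he : ¬e.IsDiag) :
    w (splitVal S (sSet V 2 ∪ edgeImg e)) + w (splitVal S (tSet V 2 ∪ edgeImg e)) =
      if #(pairFinset e ∩ U) = 1 then 2 else w 2 := by
  rw [splitVal_union_of_subset hs (disjoint_sSet_edgeImg 2 e),
    splitVal_union_of_disjoint ht (disjoint_tSet_edgeImg 2 e), card_sSet, card_tSet,
    ← card_edgeImg_inter hU]
  have hsum := card_inter_add_card_sdiff (edgeImg e) S
  rw [card_edgeImg he] at hsum
  generalize #(edgeImg e ∩ S) = k, #(edgeImg e \ S) = k' at hsum ⊢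
  obtain ⟨rfl, rfl⟩ | ⟨rfl, rfl⟩ | ⟨rfl, rfl⟩ : k = 0 ∧ k' = 2 ∨ k = 1 ∧ k' = 1 ∨ k = 2 ∧ k' = 0 :=
    by omega
  all_goals norm_num [hw0, hw1]

variable [Fintype V] (G : SimpleGraph V) [DecidableRel G.Adj]

lemma card_le_four_of_mem_H0 {α : ℕ} {p : Finset (Vtx V)} (hp : p ∈ H0 G α) : #p ≤ 4 := by
  have hedge : ∀ K : Finset (Vtx V), #K = 2 → ∀ e : Sym2 V, #(K ∪ edgeImg e) ≤ 4 := by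
    intro K hK e
    have hpair : #(pairFinset e) ≤ 2 := by
      induction e using Sym2.ind
      exact card_le_two
    have := card_union_le K (edgeImg e)
    have := card_image_le (s := pairFinset e) (f := Sum.inl (β := ℕ ⊕ ℕ))
    simp only [edgeImg] at *
    omega
  simp only [H0, mem_union, mem_powersetCard, mem_image] at hp
  rcases hp with ((⟨-, h⟩ | ⟨-, h⟩) | ⟨e, -, rfl⟩) | ⟨e, -, rfl⟩
  · omega
  · omega
  · exact hedge _ (card_sSet 2) e
  · exact hedge _ (card_tSet 2) e

lemma cutCost_H0_of_separates (hw0 : w 0 = 0) (hw1 : w 1 = 1) {α : ℕ} (hα : 2 ≤ α)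
    (hs : sSet V α ⊆ S) (ht : Disjoint (tSet V α) S) (hU : ∀ v, Sum.inl v ∈ S ↔ v ∈ U) :
    cutCost w (H0 G α) S = #G.edgeFinset * w 2 + (2 - w 2) * cutSize G U := by
  set C := G.edgeFinset.image fun e => sSet V 2 ∪ edgeImg e
  set D := G.edgeFinset.image fun e => tSet V 2 ∪ edgeImg e
  have hcliques : ∀ p ∈ H0 G α, p ∉ C ∪ D → w (splitVal S p) = 0 := by
    intro p hp hpCD
    simp only [H0, mem_union, mem_powersetCard, not_or, C, D] at hp hpCD
    rcases hp with ((⟨hpS, -⟩ | ⟨hpT, -⟩) | h) | h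
    · rw [splitVal_eq_zero_of_subset (hpS.trans hs), hw0]
    · rw [splitVal_eq_zero_of_disjoint (ht.mono_left hpT), hw0]
    · exact absurd h hpCD.1
    · exact absurd h hpCD.2
  have hCD : Disjoint C D := by
    simp only [C, D, disjoint_left, mem_image]
    rintro _ ⟨e, -, rfl⟩ ⟨e', -, h⟩
    have : sV 1 ∈ tSet V 2 ∪ edgeImg e' := h ▸ mem_union_left _ (sV_mem_sSet le_rfl one_le_two)
    simp [tSet, edgeImg, sV, tV] at this
  have hdiag : ∀ e ∈ G.edgeFinset, ¬e.IsDiag := fun e he =>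
    G.not_isDiag_of_mem_edgeSet (G.mem_edgeFinset.1 he)
  calc cutCost w (H0 G α) S = ∑ p ∈ C ∪ D, w (splitVal S p) :=
        (sum_subset (union_subset_union subset_union_right subset_rfl) hcliques).symm
    _ = ∑ e ∈ G.edgeFinset, (w (splitVal S (sSet V 2 ∪ edgeImg e)) +
          w (splitVal S (tSet V 2 ∪ edgeImg e))) := by
      rw [sum_union hCD, sum_image (union_edgeImg_injective (disjoint_sSet_edgeImg 2)).injOn,
        sum_image (union_edgeImg_injective (disjoint_tSet_edgeImg 2)).injOn, sum_add_distrib]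
    _ = ∑ e ∈ G.edgeFinset, if #(pairFinset e ∩ U) = 1 then 2 else w 2 :=
      sum_congr rfl fun e he => edge_cost_of_separates hw0 hw1 ((sSet_mono hα).trans hs)
        (ht.mono_left (tSet_mono hα)) hU (hdiag e he)
    _ = #G.edgeFinset * w 2 + (2 - w 2) * cutSize G U := by
      rw [sum_ite, sum_const, sum_const, cutSize,
        ← card_filter_add_card_filter_not (s := G.edgeFinset) (fun e => #(pairFinset e ∩ U) = 1)]
      simp only [nsmul_eq_mul, Nat.cast_add]
      ring

lemma le_cutCost_H0_of_not_separates (hw0 : w 0 = 0) (hw1 : w 1 = 1) (hw2 : 0 ≤ w 2) {α : ℕ}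
    (hs1 : sV 1 ∈ S) (ht1 : tV 1 ∉ S) (h : ¬(sSet V α ⊆ S ∧ Disjoint (tSet V α) S)) :
    (α : ℝ) - 1 ≤ cutCost w (H0 G α) S := by
  have hnn : ∀ p ∈ H0 G α, 0 ≤ w (splitVal S p) := by
    intro p hp
    have := two_mul_splitVal_le_card S p
    have := card_le_four_of_mem_H0 G hp
    obtain h | h | h : splitVal S p = 0 ∨ splitVal S p = 1 ∨ splitVal S p = 2 := by omega
    all_goals simp [h, hw0, hw1, hw2]
  have hclique : ∀ A, A.powersetCard 2 ⊆ H0 G α → #A = α → (A ∩ S).Nonempty →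
      (A \ S).Nonempty → (α : ℝ) - 1 ≤ cutCost w (H0 G α) S := by
    intro A hA hAα hin hout
    calc (α : ℝ) - 1 ≤ ∑ p ∈ A.powersetCard 2, w (splitVal S p) :=
          hAα ▸ card_sub_one_le_sum_splitVal_pairs hw0 hw1 hin hout
      _ ≤ cutCost w (H0 G α) S := sum_le_sum_of_subset_of_nonneg hA fun p hp _ => hnn p hp
  rcases not_and_or.1 h with hs | ht
  · obtain ⟨x, hxA, hxS⟩ := not_subset.1 hs
    have hα : 1 ≤ α := card_sSet (V := V) α ▸ card_pos.2 ⟨x, hxA⟩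
    exact hclique _ (fun p hp => by simp [H0, hp]) (card_sSet α)
      ⟨_, mem_inter.2 ⟨sV_mem_sSet le_rfl hα, hs1⟩⟩ ⟨x, mem_sdiff.2 ⟨hxA, hxS⟩⟩
  · obtain ⟨x, hxA, hxS⟩ := not_disjoint_iff.1 ht
    have hα : 1 ≤ α := card_tSet (V := V) α ▸ card_pos.2 ⟨x, hxA⟩
    exact hclique _ (fun p hp => by simp [H0, hp]) (card_tSet α)
      ⟨x, mem_inter.2 ⟨hxA, hxS⟩⟩ ⟨_, mem_sdiff.2 ⟨tV_mem_tSet le_rfl hα, ht1⟩⟩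

end hypergraph

section maxCut

variable {V : Type*} [Fintype V] [DecidableEq V] (G : SimpleGraph V) [DecidableRel G.Adj]

lemma cutSize_le_maxCut (U : Finset V) : cutSize G U ≤ maxCut G :=
  le_sup (f := cutSize G) (mem_univ U)

lemma exists_cutSize_eq_maxCut : ∃ U, cutSize G U = maxCut G := by
  obtain ⟨U, -, hU⟩ := exists_mem_eq_sup univ univ_nonempty (cutSize G)
  exact ⟨U, hU.symm⟩

end maxCut

theorem stmt1 {V : Type*} [Fintype V] [DecidableEq V]
    (G : SimpleGraph V) [DecidableRel G.Adj]
    (m : ℕ) (hm : m = G.edgeFinset.card) (hm1 : 1 ≤ m)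
    (w : ℕ → ℝ) (hw0 : w 0 = 0) (hw1 : w 1 = 1) (hw2 : 2 < w 2)
    (α : ℕ) (hα : (m : ℝ) * w 2 + 1 ≤ (α : ℝ)) :
    IsLeast {x : ℝ | ∃ S : Finset (Vtx V), sV 1 ∈ S ∧ tV 1 ∉ S ∧
        x = ∑ e ∈ H0 G α, w (splitVal S e)}
      ((m : ℝ) * w 2 + (2 - w 2) * (maxCut G : ℝ)) := by
  have hα2 : 2 ≤ α := by
    have : (1 : ℝ) ≤ m := by exact_mod_cast hm1
    exact_mod_cast (show (2 : ℝ) ≤ α by nlinarith)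
  subst hm
  refine ⟨?_, ?_⟩
  · obtain ⟨U, hU⟩ := exists_cutSize_eq_maxCut G
    set S := sSet V α ∪ U.image Sum.inl
    have ht : Disjoint (tSet V α) S := by simp [S, disjoint_left, tSet, sSet, tV, sV]
    have hSU : ∀ v, Sum.inl v ∈ S ↔ v ∈ U := by simp [S, sSet, sV]
    refine ⟨S, mem_union_left _ (sV_mem_sSet le_rfl (by omega)), by simp [S, sSet, tV, sV], ?_⟩
    rw [← hU, ← cutCost_H0_of_separates G hw0 hw1 hα2 subset_union_left ht hSU]
    rfl
  · rintro x ⟨S, hs1, ht1, rfl⟩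
    change _ ≤ cutCost w (H0 G α) S
    by_cases hsep : sSet V α ⊆ S ∧ Disjoint (tSet V α) S
    · set U := univ.filter fun v => Sum.inl v ∈ S
      rw [cutCost_H0_of_separates G hw0 hw1 hα2 hsep.1 hsep.2 (U := U) (by simp [U])]
      have : (cutSize G U : ℝ) ≤ maxCut G := by exact_mod_cast cutSize_le_maxCut G U
      nlinarith
    · have := le_cutCost_H0_of_not_separates G hw0 hw1 (by linarith) hs1 ht1 hsep
      have : (0 : ℝ) ≤ maxCut G := Nat.cast_nonneg _
      nlinarith
end

section
/- Let k ≥ 4 and let α > 2k be integers. Let A be a set of α vertices and consider the k-uniform hyperclique on A, i.e., the hypergraph whose hyperedges are all k-element subsets of A. Then for every cut S with 1 ≤ |S ∩ A| ≤ α − 1 (i.e., S separates at least two vertices of A), the number of hyperedges whose split value equals 1 is at least α. Consequently, for any nonnegative weights with w_1 = 1, the cardinality-based cost of any such cut is at least α. -/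
open Finset

theorem Nat.choose_two_le_choose {n r : ℕ} (hr : 2 ≤ r) (hrn : r + 2 ≤ n) :
    n.choose 2 ≤ n.choose r := by
  wlog hhalf : 2 * r ≤ n generalizing r
  · rw [← Nat.choose_symm (by omega : r ≤ n)]
    exact this (by omega) (by omega) (by omega)
  induction r, hr using Nat.le_induction with
  | base => rfl
  | succ r hr ih =>
    exact (ih (by omega) (by omega)).trans (Nat.choose_le_succ_of_lt_half_left (by omega))

theorem Nat.add_one_le_choose {n r : ℕ} (hr : 2 ≤ r) (hrn : r + 2 ≤ n) :
    n + 1 ≤ n.choose r := by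
  refine le_trans ?_ (Nat.choose_two_le_choose hr hrn)
  rw [Nat.choose_two_right, Nat.le_div_iff_mul_le two_pos]
  obtain ⟨m, rfl⟩ : ∃ m, n = m + 4 := ⟨n - 4, by omega⟩
  rw [show m + 4 - 1 = m + 3 by omega]
  nlinarith

theorem Nat.add_le_mul_choose {t u r : ℕ} (ht : 1 ≤ t) (hr : 2 ≤ r) (hru : r + 2 ≤ u) :
    t + u ≤ t * u.choose r :=
  calc t + u ≤ t * (u + 1) := by nlinarith
    _ ≤ t * u.choose r := Nat.mul_le_mul_left t (Nat.add_one_le_choose hr hru)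

theorem card_filter_eq_one_le_sum {ι R : Type*} [Semiring R] [PartialOrder R]
    [IsOrderedRing R] (s : Finset ι) (f : ι → ℕ) (w : ℕ → R)
    (hw : ∀ n, 0 ≤ w n) (hw1 : w 1 = 1) :
    (#{i ∈ s | f i = 1} : R) ≤ ∑ i ∈ s, w (f i) := by
  rw [card_filter, Nat.cast_sum]
  refine sum_le_sum fun i _ => ?_
  split_ifs with h
  · simp [h, hw1]
  · simpa using hw _

section

variable {W : Type*} [DecidableEq W]

theorem splitVal_sdiff_of_subset {A S e : Finset W} (he : e ⊆ A) :
    splitVal (A \ S) e = splitVal S e := by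
  have hinter : e ∩ (A \ S) = e \ S := by
    ext x; simp only [mem_inter, mem_sdiff]; have := @he x; tauto
  have hsdiff : e \ (A \ S) = e ∩ S := by
    ext x; simp only [mem_inter, mem_sdiff]; have := @he x; tauto
  rw [splitVal, splitVal, hinter, hsdiff, min_comm]

theorem card_mul_choose_le_card_filter_splitVal_eq_one {k : ℕ} (hk : 2 ≤ k) (A S : Finset W) :
    #(A ∩ S) * (#(A \ S)).choose (k - 1) ≤ #{e ∈ A.powersetCard k | splitVal S e = 1} := by
  rw [← card_powersetCard, ← card_product]
  have hsplit : ∀ p ∈ (A ∩ S) ×ˢ (A \ S).powersetCard (k - 1),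
      insert p.1 p.2 ∩ S = {p.1} ∧ insert p.1 p.2 \ S = p.2 := by
    rintro ⟨x, f⟩ hp
    simp only [mem_product, mem_inter, mem_powersetCard] at hp
    have hfS : Disjoint f S := disjoint_of_subset_left hp.2.1 sdiff_disjoint
    rw [insert_inter_of_mem hp.1.2, disjoint_iff_inter_eq_empty.1 hfS,
      insert_sdiff_of_mem _ hp.1.2, sdiff_eq_self_of_disjoint hfS]
    exact ⟨rfl, rfl⟩
  refine card_le_card_of_injOn (fun p => insert p.1 p.2) (fun p hp => ?_) fun p hp q hq hpq => ?_
  · obtain ⟨hinter, hsdiff⟩ := hsplit p hp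
    simp only [mem_coe, mem_product, mem_inter, mem_powersetCard] at hp
    obtain ⟨⟨hxA, -⟩, hfU, hf⟩ := hp
    have hcard : #(insert p.1 p.2) = k := by
      rw [← card_inter_add_card_sdiff _ S, hinter, hsdiff, card_singleton, hf]
      omega
    rw [mem_coe, mem_filter, mem_powersetCard, splitVal, hinter, hsdiff, card_singleton, hf, hcard]
    exact ⟨⟨insert_subset hxA (hfU.trans sdiff_subset), rfl⟩, by omega⟩
  · obtain ⟨hpS, hpS'⟩ := hsplit p hp
    obtain ⟨hqS, hqS'⟩ := hsplit q hq
    simp only at hpq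
    exact Prod.ext (singleton_injective (hpS.symm.trans (hpq ▸ hqS)))
      (hpS'.symm.trans (hpq ▸ hqS'))

theorem card_sdiff_mul_choose_le_card_filter_splitVal_eq_one {k : ℕ} (hk : 2 ≤ k)
    (A S : Finset W) :
    #(A \ S) * (#(A ∩ S)).choose (k - 1) ≤ #{e ∈ A.powersetCard k | splitVal S e = 1} := by
  have h := card_mul_choose_le_card_filter_splitVal_eq_one hk A (A \ S)
  rwa [inter_eq_right.2 sdiff_subset, sdiff_sdiff_self_left,
    filter_congr fun e he => by rw [splitVal_sdiff_of_subset (mem_powersetCard.1 he).1]] at h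

end

theorem stmt6 {W : Type*} [DecidableEq W]
    (k α : ℕ) (hk : 4 ≤ k) (hα : 2 * k < α)
    (A : Finset W) (hA : A.card = α)
    (S : Finset W) (h1 : 1 ≤ (A ∩ S).card) (h2 : (A ∩ S).card ≤ α - 1)
    (w : ℕ → ℝ) (hw : ∀ n, 0 ≤ w n) (hw1 : w 1 = 1) :
    α ≤ ((A.powersetCard k).filter (fun e => splitVal S e = 1)).card ∧
      (α : ℝ) ≤ ∑ e ∈ A.powersetCard k, w (splitVal S e) := by
  have hcard : #(A ∩ S) + #(A \ S) = α := by rw [card_inter_add_card_sdiff, hA]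
  have hsplit_one : α ≤ #{e ∈ A.powersetCard k | splitVal S e = 1} := by
    rcases le_or_gt (k + 1) #(A \ S) with hU_large | hU_small
    · calc α = #(A ∩ S) + #(A \ S) := hcard.symm
        _ ≤ #(A ∩ S) * (#(A \ S)).choose (k - 1) :=
          Nat.add_le_mul_choose h1 (by omega) (by omega)
        _ ≤ _ := card_mul_choose_le_card_filter_splitVal_eq_one (by omega) A S
    · calc α = #(A \ S) + #(A ∩ S) := by omega
        _ ≤ #(A \ S) * (#(A ∩ S)).choose (k - 1) :=
          Nat.add_le_mul_choose (by omega) (by omega) (by omega)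
        _ ≤ _ := card_sdiff_mul_choose_le_card_filter_splitVal_eq_one (by omega) A S
  exact ⟨hsplit_one, (Nat.cast_le.2 hsplit_one).trans (card_filter_eq_one_le_sum _ _ w hw hw1)⟩
end

section
/- Let k ≥ 4 and let i be an integer with 2 ≤ i ≤ ⌊k/2⌋ − 1, and let nonnegative weights w_{i−1}, w_i, w_{i+1} be given. Consider two k-element hyperedges e_1 = {s_1, …, s_{i−1}, x, y, t_1, …, t_{k−i−1}} and e_2 = {s_1, …, s_{k−i−1}, x, y, t_1, …, t_{i−1}} (all s-vertices, t-vertices, x and y distinct), and a cut S such that all vertices s_1, …, s_{k−i−1} ∈ S and t_1, …, t_{k−i−1} ∉ S. Then w_{split value of e_1} + w_{split value of e_2} equals w_{i−1} + w_{i+1} if x and y lie on the same side of the cut, and equals 2·w_i if x and y lie on opposite sides. -/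
open Finset

section SplitVal

variable {W : Type*} [DecidableEq W] {S : Finset W}

theorem splitVal_union_union {A P B : Finset W} (hA : A ⊆ S) (hB : Disjoint B S)
    (hAP : Disjoint A P) (hBP : Disjoint B P) :
    splitVal S (A ∪ P ∪ B) = min (#A + #(P ∩ S)) (#B + #(P \ S)) := by
  have hinter : (A ∪ P ∪ B) ∩ S = A ∪ P ∩ S := by
    rw [union_inter_distrib_right, union_inter_distrib_right, inter_eq_left.2 hA,
      disjoint_iff_inter_eq_empty.1 hB, union_empty]
  have hsdiff : (A ∪ P ∪ B) \ S = B ∪ P \ S := by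
    rw [union_sdiff_distrib, union_sdiff_distrib, sdiff_eq_empty_iff_subset.2 hA,
      sdiff_eq_self_of_disjoint hB, empty_union, union_comm]
  rw [splitVal, hinter, hsdiff, card_union_of_disjoint (hAP.mono_right inter_subset_left),
    card_union_of_disjoint (hBP.mono_right sdiff_subset)]

theorem card_pair_inter_add_card_pair_sdiff {x y : W} (hxy : x ≠ y) :
    #({x, y} ∩ S) + #({x, y} \ S) = 2 := by
  rw [card_inter_add_card_sdiff, card_pair hxy]

theorem card_pair_inter_eq_one_iff {x y : W} (hxy : x ≠ y) :
    #({x, y} ∩ S) = 1 ↔ ¬(x ∈ S ↔ y ∈ S) := by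
  by_cases hx : x ∈ S <;> by_cases hy : y ∈ S <;>
    simp [insert_inter_of_mem, insert_inter_of_notMem, hx, hy, hxy]

theorem splitVal_image_union_pair_union_image {s t : ℕ → W} {x y : W} {m a b : ℕ}
    (ha : a ≤ m) (hb : b ≤ m)
    (hs : Set.InjOn s ↑(Icc 1 m)) (ht : Set.InjOn t ↑(Icc 1 m))
    (hsxy : ∀ p ∈ Icc 1 m, s p ≠ x ∧ s p ≠ y ∧ t p ≠ x ∧ t p ≠ y)
    (hsS : ∀ p ∈ Icc 1 m, s p ∈ S) (htS : ∀ p ∈ Icc 1 m, t p ∉ S) :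
    splitVal S ((Icc 1 a).image s ∪ {x, y} ∪ (Icc 1 b).image t) =
      min (a + #({x, y} ∩ S)) (b + #({x, y} \ S)) := by
  have hIcc {n : ℕ} (hn : n ≤ m) : Icc 1 n ⊆ Icc 1 m := Icc_subset_Icc_right hn
  have hcard {f : ℕ → W} {n : ℕ} (hf : Set.InjOn f ↑(Icc 1 m)) (hn : n ≤ m) :
      #((Icc 1 n).image f) = n := by
    rw [card_image_of_injOn (hf.mono (coe_subset.2 (hIcc hn))), Nat.card_Icc,
      Nat.add_sub_cancel]
  rw [splitVal_union_union, hcard hs ha, hcard ht hb]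
  · exact image_subset_iff.2 fun p hp => hsS p (hIcc ha hp)
  · refine disjoint_left.2 fun _ hv => ?_
    obtain ⟨p, hp, rfl⟩ := mem_image.1 hv
    exact htS p (hIcc hb hp)
  · refine disjoint_left.2 fun _ hv => ?_
    obtain ⟨p, hp, rfl⟩ := mem_image.1 hv
    simp [(hsxy p (hIcc ha hp)).1, (hsxy p (hIcc ha hp)).2.1]
  · refine disjoint_left.2 fun _ hv => ?_
    obtain ⟨p, hp, rfl⟩ := mem_image.1 hv
    simp [(hsxy p (hIcc hb hp)).2.2.1, (hsxy p (hIcc hb hp)).2.2.2]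

end SplitVal

theorem add_weight_min_of_ne_one (w : ℕ → ℝ) {i m c d : ℕ} (hi : 1 ≤ i) (him : i + 1 ≤ m)
    (hcd : c + d = 2) (hc : c ≠ 1) :
    w (min (i - 1 + c) (m + d)) + w (min (m + c) (i - 1 + d)) = w (i - 1) + w (i + 1) := by
  obtain ⟨rfl, rfl⟩ | ⟨rfl, rfl⟩ : c = 0 ∧ d = 2 ∨ c = 2 ∧ d = 0 := by omega
  · rw [show min (i - 1 + 0) (m + 2) = i - 1 by omega,
      show min (m + 0) (i - 1 + 2) = i + 1 by omega]
  · rw [show min (i - 1 + 2) (m + 0) = i + 1 by omega,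
      show min (m + 2) (i - 1 + 0) = i - 1 by omega, add_comm]

theorem add_weight_min_one (w : ℕ → ℝ) {i m : ℕ} (hi : 1 ≤ i) (him : i ≤ m) :
    w (min (i - 1 + 1) (m + 1)) + w (min (m + 1) (i - 1 + 1)) = 2 * w i := by
  rw [show min (i - 1 + 1) (m + 1) = i by omega, show min (m + 1) (i - 1 + 1) = i by omega]
  ring

theorem stmt9_general {W : Type*} [DecidableEq W]
    (k i : ℕ) (hi1 : 2 ≤ i) (hi2 : i ≤ k / 2 - 1)
    (w : ℕ → ℝ)
    (s t : ℕ → W) (x y : W)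
    (hs : Set.InjOn s ↑(Finset.Icc 1 (k - i - 1)))
    (ht : Set.InjOn t ↑(Finset.Icc 1 (k - i - 1)))
    (hsxy : ∀ p ∈ Finset.Icc 1 (k - i - 1), s p ≠ x ∧ s p ≠ y ∧ t p ≠ x ∧ t p ≠ y)
    (hxy : x ≠ y)
    (S : Finset W)
    (hsS : ∀ p ∈ Finset.Icc 1 (k - i - 1), s p ∈ S)
    (htS : ∀ p ∈ Finset.Icc 1 (k - i - 1), t p ∉ S) :
    ((x ∈ S ↔ y ∈ S) →
      w (splitVal S ((Finset.Icc 1 (i - 1)).image s ∪ {x, y} ∪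
          (Finset.Icc 1 (k - i - 1)).image t)) +
        w (splitVal S ((Finset.Icc 1 (k - i - 1)).image s ∪ {x, y} ∪
          (Finset.Icc 1 (i - 1)).image t)) = w (i - 1) + w (i + 1)) ∧
    (¬(x ∈ S ↔ y ∈ S) →
      w (splitVal S ((Finset.Icc 1 (i - 1)).image s ∪ {x, y} ∪
          (Finset.Icc 1 (k - i - 1)).image t)) +
        w (splitVal S ((Finset.Icc 1 (k - i - 1)).image s ∪ {x, y} ∪
          (Finset.Icc 1 (i - 1)).image t)) = 2 * w i) := by
  have hi : 1 ≤ i := by omega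
  have him : i + 1 ≤ k - i - 1 := by omega
  rw [splitVal_image_union_pair_union_image (by omega) le_rfl hs ht hsxy hsS htS,
    splitVal_image_union_pair_union_image le_rfl (by omega) hs ht hsxy hsS htS]
  have hcd := card_pair_inter_add_card_pair_sdiff (S := S) hxy
  refine ⟨fun hsame => ?_, fun hopp => ?_⟩
  · exact add_weight_min_of_ne_one w hi him hcd
      (mt (card_pair_inter_eq_one_iff hxy).1 (not_not_intro hsame))
  · have hc := (card_pair_inter_eq_one_iff hxy).2 hopp
    rw [hc, show #({x, y} \ S) = 1 by omega]
    exact add_weight_min_one w hi (by omega)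

theorem stmt9 {W : Type*} [DecidableEq W]
    (k i : ℕ) (hk : 4 ≤ k) (hi1 : 2 ≤ i) (hi2 : i ≤ k / 2 - 1)
    (w : ℕ → ℝ) (hw : ∀ n, 0 ≤ w n)
    (s t : ℕ → W) (x y : W)
    (hs : Set.InjOn s ↑(Finset.Icc 1 (k - i - 1)))
    (ht : Set.InjOn t ↑(Finset.Icc 1 (k - i - 1)))
    (hst : ∀ p ∈ Finset.Icc 1 (k - i - 1), ∀ q ∈ Finset.Icc 1 (k - i - 1), s p ≠ t q)
    (hsxy : ∀ p ∈ Finset.Icc 1 (k - i - 1), s p ≠ x ∧ s p ≠ y ∧ t p ≠ x ∧ t p ≠ y)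
    (hxy : x ≠ y)
    (S : Finset W)
    (hsS : ∀ p ∈ Finset.Icc 1 (k - i - 1), s p ∈ S)
    (htS : ∀ p ∈ Finset.Icc 1 (k - i - 1), t p ∉ S) :
    ((x ∈ S ↔ y ∈ S) →
      w (splitVal S ((Finset.Icc 1 (i - 1)).image s ∪ {x, y} ∪
          (Finset.Icc 1 (k - i - 1)).image t)) +
        w (splitVal S ((Finset.Icc 1 (k - i - 1)).image s ∪ {x, y} ∪
          (Finset.Icc 1 (i - 1)).image t)) = w (i - 1) + w (i + 1)) ∧
    (¬(x ∈ S ↔ y ∈ S) →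
      w (splitVal S ((Finset.Icc 1 (i - 1)).image s ∪ {x, y} ∪
          (Finset.Icc 1 (k - i - 1)).image t)) +
        w (splitVal S ((Finset.Icc 1 (k - i - 1)).image s ∪ {x, y} ∪
          (Finset.Icc 1 (i - 1)).image t)) = 2 * w i) :=
  stmt9_general k i hi1 hi2 w s t x y hs ht hsxy hxy S hsS htS
end
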